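/- Let K > 0 and let {X_t : t ∈ T} be a family of unital C*-algebras with br_K(X_t) ≤ n for every t. Then the ℓ∞-direct sum (product) ∏_{t∈T} X_t satisfies br_K(∏ X_t) ≤ n. -/

import Mathlib

open scoped ENNReal

/-- A tuple `(y_1,…,y_m)` of self-adjoint elements is `K`-unessential if for every rational
`δ > 0` there is a self-adjoint tuple `(z_1,…,z_m)` with `‖y_k - z_k‖ ≤ δ`, `∑ z_k²`
invertible, and `‖(∑ z_k²)⁻¹‖ ≤ 1/(K·δ²)`. -/
def KUnessential {A : Type*} [NormedRing A] [StarRing A] (K : ℝ) {m : ℕ}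
    (y : Fin m → A) : Prop :=
  ∀ δ : ℚ, 0 < δ → ∃ z : Fin m → A,
    (∀ k, IsSelfAdjoint (z k)) ∧ (∀ k, ‖y k - z k‖ ≤ (δ : ℝ)) ∧
    ∃ b : A, (∑ k, (z k) ^ 2) * b = 1 ∧ b * (∑ k, (z k) ^ 2) = 1 ∧
      ‖b‖ ≤ 1 / (K * (δ : ℝ) ^ 2)

/-!
Everything is coordinatewise. Approximate each coordinate tuple `x(t)` within `ε/2` by a
`K`-unessential tuple `y(t)`; being within `ε/2` of the bounded family `x`, the `y(t)` form a
bounded family. For each `δ` the witnesses `z(t)` are likewise bounded, and the inverses `b(t)`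
of `∑ z_k(t)²` are bounded by `1/(Kδ²)` independently of `t`, so they assemble to an inverse in
`ℓ∞`.
-/

namespace lp

section Normed

variable {ι : Type*} {E : ι → Type*} [∀ i, NormedAddCommGroup (E i)]

theorem memℓp_infty_of_norm_sub_le (f : lp E ∞) {g : ∀ i, E i} {C : ℝ}
    (h : ∀ i, ‖f i - g i‖ ≤ C) : Memℓp g ∞ :=
  memℓp_infty ⟨‖f‖ + C, by
    rintro - ⟨i, rfl⟩
    calc ‖g i‖ ≤ ‖f i‖ + ‖f i - g i‖ := norm_le_norm_add_norm_sub ..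
      _ ≤ ‖f‖ + C := add_le_add (norm_apply_le_norm ENNReal.top_ne_zero f i) (h i)⟩

theorem exists_coeFn_eq_norm_sub_le (f : lp E ∞) (g : ∀ i, E i) {C : ℝ} (hC : 0 ≤ C)
    (h : ∀ i, ‖f i - g i‖ ≤ C) : ∃ g' : lp E ∞, ⇑g' = g ∧ ‖f - g'‖ ≤ C :=
  ⟨⟨g, memℓp_infty_of_norm_sub_le f h⟩, rfl, norm_le_of_forall_le hC h⟩

theorem isSelfAdjoint_iff {p : ℝ≥0∞} [∀ i, StarAddMonoid (E i)] [∀ i, NormedStarGroup (E i)]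
    {f : lp E p} : IsSelfAdjoint f ↔ ∀ i, IsSelfAdjoint (f i) := by
  simp only [IsSelfAdjoint, lp.ext_iff, funext_iff, lp.star_apply]

end Normed

variable {ι : Type*} {B : ι → Type*} [∀ i, NormedRing (B i)] [∀ i, NormOneClass (B i)]
  [∀ i, StarRing (B i)] [∀ i, NormedStarGroup (B i)]

theorem kUnessential_of_forall_apply {K : ℝ} (hK : 0 ≤ K) {m : ℕ} {y : Fin m → lp B ∞}
    (hy : ∀ i, KUnessential K fun k => y k i) : KUnessential K y := by
  intro δ hδ
  choose Z hZsa hyZ b hb₁ hb₂ hb using fun i => hy i δ hδ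
  choose z hz hyz using fun k =>
    exists_coeFn_eq_norm_sub_le (y k) (fun i => Z i k) (by positivity) fun i => hyZ i k
  have hsum : ⇑(∑ k, z k ^ 2) = fun i => ∑ k, Z i k ^ 2 := by
    ext i
    simp only [coeFn_sum, Finset.sum_apply, infty_coeFn_pow, Pi.pow_apply, hz]
  have hbmem : Memℓp b ∞ := memℓp_infty ⟨_, Set.forall_mem_range.2 hb⟩
  refine ⟨z, fun k => isSelfAdjoint_iff.2 fun i => hz k ▸ hZsa i k, hyz, ⟨b, hbmem⟩, ?_, ?_,
    norm_le_of_forall_le (by positivity) hb⟩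
  · ext1
    rw [infty_coeFn_mul, hsum, infty_coeFn_one]
    exact funext hb₁
  · ext1
    rw [infty_coeFn_mul, hsum, infty_coeFn_one]
    exact funext hb₂

end lp

/-- If `br_K(X_t) ≤ n` for each `t`, then the ℓ∞-direct sum `∏_{t ∈ T} X_t` (realized as
`lp X ∞`) satisfies `br_K(∏ X_t) ≤ n`. -/
theorem stmt_12 {T : Type*} {X : T → Type*} [∀ t, CStarAlgebra (X t)]
    [∀ t, Nontrivial (X t)] (K : ℝ) (hK : 0 < K) (n : ℕ)
    (h : ∀ t, ∀ x : Fin (n + 1) → X t, (∀ k, IsSelfAdjoint (x k)) → ∀ ε : ℝ, 0 < ε →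
      ∃ y : Fin (n + 1) → X t, (∀ k, IsSelfAdjoint (y k)) ∧ KUnessential K y ∧
        ∀ k, ‖x k - y k‖ < ε) :
    ∀ x : Fin (n + 1) → lp X ∞, (∀ k, IsSelfAdjoint (x k)) → ∀ ε : ℝ, 0 < ε →
      ∃ y : Fin (n + 1) → lp X ∞, (∀ k, IsSelfAdjoint (y k)) ∧ KUnessential K y ∧
        ∀ k, ‖x k - y k‖ < ε := by
  intro x hx ε hε
  choose Y hYsa hYun hxY using fun t =>
    h t (fun k => x k t) (fun k => lp.isSelfAdjoint_iff.1 (hx k) t) (ε / 2) (half_pos hε)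
  choose y hy hxy using fun k =>
    lp.exists_coeFn_eq_norm_sub_le (x k) (fun t => Y t k) (half_pos hε).le fun t => (hxY t k).le
  refine ⟨y, fun k => lp.isSelfAdjoint_iff.2 fun t => hy k ▸ hYsa t k,
    lp.kUnessential_of_forall_apply hK.le fun t => ?_, fun k => (hxy k).trans_lt (half_lt_self hε)⟩
  simpa only [hy] using hYun t
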